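/- Let G and H be nontrivial connected graphs with hn_cc(H) = 2. Then hn_cc(G) ≤ hn_cc(G □ H) ≤ hn_cc(G) + 1. -/

import Mathlib

open SimpleGraph

variable {V α β : Type*}

/-- A set `S` is cycle convex in `G` if no vertex outside `S` lies on a cycle in the
subgraph induced by `S ∪ {w}`. -/
def CycleConvex (G : SimpleGraph V) (S : Set V) : Prop :=
  ∀ w : V, w ∉ S →
    ∀ c : (G.induce (insert w S)).Walk ⟨w, Set.mem_insert w S⟩ ⟨w, Set.mem_insert w S⟩,
      ¬ c.IsCycle

/-- The cycle convex hull of `S`: the smallest cycle convex set containing `S`. -/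
def cycleHull (G : SimpleGraph V) (S : Set V) : Set V :=
  ⋂₀ {T : Set V | S ⊆ T ∧ CycleConvex G T}

/-- The cycle hull number: minimum size of a set whose cycle convex hull is everything. -/
noncomputable def cycleHullNumber (G : SimpleGraph V) : ℕ :=
  sInf {n : ℕ | ∃ S : Set V, S.ncard = n ∧ cycleHull G S = Set.univ}

/-- The cycle convexity number: maximum size of a proper cycle convex set. -/
noncomputable def cycleConvexityNumber (G : SimpleGraph V) : ℕ :=
  sSup {n : ℕ | ∃ S : Set V, S.ncard = n ∧ CycleConvex G S ∧ S ≠ Set.univ}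

/-- The independence number of a graph. -/
noncomputable def indepNumber (G : SimpleGraph V) : ℕ :=
  sSup {n : ℕ | ∃ S : Set V, S.ncard = n ∧ S.Pairwise fun a b => ¬ G.Adj a b}

/-- The strong product of two simple graphs. -/
def strongProd (G : SimpleGraph α) (H : SimpleGraph β) : SimpleGraph (α × β) where
  Adj x y := (G.Adj x.1 y.1 ∧ x.2 = y.2) ∨ (x.1 = y.1 ∧ H.Adj x.2 y.2) ∨
    (G.Adj x.1 y.1 ∧ H.Adj x.2 y.2)
  symm := ⟨fun x y h => by
    rcases h with ⟨h1, h2⟩ | ⟨h1, h2⟩ | ⟨h1, h2⟩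
    · exact Or.inl ⟨h1.symm, h2.symm⟩
    · exact Or.inr (Or.inl ⟨h1.symm, h2.symm⟩)
    · exact Or.inr (Or.inr ⟨h1.symm, h2.symm⟩)⟩
  loopless := ⟨fun x h => by
    rcases h with ⟨h1, _⟩ | ⟨_, h2⟩ | ⟨h1, _⟩
    · exact G.irrefl h1
    · exact H.irrefl h2
    · exact G.irrefl h1⟩

/-- The lexicographic product of two simple graphs. -/
def lexProd (G : SimpleGraph α) (H : SimpleGraph β) : SimpleGraph (α × β) where
  Adj x y := G.Adj x.1 y.1 ∨ (x.1 = y.1 ∧ H.Adj x.2 y.2)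
  symm := ⟨fun x y h => by
    rcases h with h1 | ⟨h1, h2⟩
    · exact Or.inl h1.symm
    · exact Or.inr ⟨h1.symm, h2.symm⟩⟩
  loopless := ⟨fun x h => by
    rcases h with h1 | ⟨_, h2⟩
    · exact G.irrefl h1
    · exact H.irrefl h2⟩

/-! Cycle convexity is a connectivity condition: a vertex `w ∉ S` lies on a cycle of `G[S ∪ {w}]`
exactly when two distinct neighbours of `w` in `S` are connected inside `G[S]`.

Lower bound: if `C` is cycle convex in `G`, then so is `C × V(H)` in `G □ H`, because the two
neighbours of an outside vertex `w` in `C × V(H)` lie in the `G`-layer of `w`, and a connection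
between them projects to a connection in `G[C]`. Hence the projection of a hull set of `G □ H` is a
hull set of `G`.

Upper bound: for a hull set `S` of `G`, a hull set `{b₁, b₂}` of `H` and any `u₀`, the hull of
`S × {b₁} ∪ {(u₀, b₂)}` contains the layer `V(G) × {b₁}` and then the fibre `{u₀} × V(H)`. A cycle
convex set of `G □ H` containing three corners of a square contains the fourth (the square is a
4-cycle), and this spreads the hull over all of `V(G) × V(H)` by connectivity. -/

namespace SimpleGraph

variable {W : Type*}

theorem Reachable.of_adj_imp {G : SimpleGraph V} {P : V → Prop}
    (hP : ∀ ⦃x y⦄, G.Adj x y → P x → P y) {u v : V} (h : G.Reachable u v) (hu : P u) : P v := by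
  rw [reachable_iff_reflTransGen] at h
  induction h with
  | refl => exact hu
  | tail _ hxy ih => exact hP hxy ih

theorem exists_isCycle_iff_exists_walk_avoiding {K : SimpleGraph W} {w : W} :
    (∃ c : K.Walk w w, c.IsCycle) ↔
      ∃ x y, K.Adj w x ∧ K.Adj w y ∧ x ≠ y ∧ ∃ p : K.Walk x y, w ∉ p.support := by
  constructor
  · rintro ⟨c, hc⟩
    cases c with
    | nil => exact absurd hc Walk.not_isCycle_nil
    | @cons _ x _ hx p =>
      obtain ⟨y, q, hy, rfl⟩ : ∃ y, ∃ (q : K.Walk x y) (hy : K.Adj y w), p = q.concat hy := by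
        cases p with
        | nil => exact (hx.ne rfl).elim
        | cons h p => exact Walk.exists_cons_eq_concat h p
      rw [Walk.cons_isCycle_iff, Walk.concat_isPath_iff, Walk.edges_concat] at hc
      refine ⟨x, y, hx, hy.symm, ?_, q, hc.1.2⟩
      rintro rfl
      exact hc.2 (by simp [Sym2.eq_swap])
  · classical
    rintro ⟨x, y, hx, hy, hxy, p, hp⟩
    have hw : w ∉ p.bypass.support := fun h => hp (p.support_bypass_subset_support h)
    refine ⟨Walk.cons hx (p.bypass.concat hy.symm), ?_⟩
    rw [Walk.cons_isCycle_iff, Walk.concat_isPath_iff, Walk.edges_concat]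
    refine ⟨⟨p.bypass_isPath, hw⟩, ?_⟩
    simp only [List.concat_eq_append, List.mem_append, List.mem_singleton, not_or]
    exact ⟨fun he => hw (p.bypass.fst_mem_support_of_mem_edges he), by simp [hxy, hx.ne']⟩

end SimpleGraph

open SimpleGraph Set

section CycleConvex

variable {W : Type*} {G : SimpleGraph V} {S T : Set V}

theorem cycleConvex_iff :
    CycleConvex G S ↔ ∀ w ∉ S, ∀ x y : S, G.Adj w x → G.Adj w y → x ≠ y →
      ¬ (G.induce S).Reachable x y := by
  refine forall₂_congr fun w hw => ?_
  simp only [exists_isCycle_iff_exists_walk_avoiding, ← not_and, ← not_exists]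
  refine not_congr ⟨?_, ?_⟩
  · rintro ⟨x, y, hx, hy, hxy, p, hp⟩
    have hS : ∀ v ∈ (p.map (Embedding.induce _).toHom).support, v ∈ S := by
      simp only [Walk.support_map, List.mem_map]
      rintro _ ⟨v, hv, rfl⟩
      exact v.2.resolve_left fun h => hp ((Subtype.ext h : v = ⟨w, mem_insert w S⟩) ▸ hv)
    refine ⟨_, _, ?_, ?_, ?_, ⟨(p.map (Embedding.induce _).toHom).induce S hS⟩⟩
    exacts [hx, hy, fun h => hxy (Subtype.ext (Subtype.mk.inj h))]
  · rintro ⟨x, y, hx, hy, hxy, ⟨p⟩⟩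
    set f := G.induceHomOfLE (subset_insert w S)
    refine ⟨f x, f y, hx, hy, f.injective.ne hxy, p.map f.toHom, ?_⟩
    simp only [Walk.support_map, List.mem_map, not_exists, not_and]
    intro v _ h
    have hv : (v : V) = w := congrArg Subtype.val h
    exact hw (hv ▸ v.2)

theorem subset_cycleHull (G : SimpleGraph V) (S : Set V) : S ⊆ cycleHull G S :=
  fun _ hx _ hT => hT.1 hx

theorem cycleHull_subset (hST : S ⊆ T) (hT : CycleConvex G T) : cycleHull G S ⊆ T :=
  sInter_subset_of_mem ⟨hST, hT⟩

theorem cycleHull_univ (G : SimpleGraph V) : cycleHull G univ = univ :=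
  univ_subset_iff.1 (subset_cycleHull G univ)

theorem CycleConvex.eq_univ_of_subset (hT : CycleConvex G T) (hS : cycleHull G S = univ)
    (hST : S ⊆ T) : T = univ :=
  univ_subset_iff.1 (hS ▸ cycleHull_subset hST hT)

theorem cycleConvex_cycleHull (G : SimpleGraph V) (S : Set V) :
    CycleConvex G (cycleHull G S) := by
  refine cycleConvex_iff.2 fun w hw x y hx hy hxy hr => ?_
  obtain ⟨T, hST, hT, hwT⟩ : ∃ T, S ⊆ T ∧ CycleConvex G T ∧ w ∉ T := by
    simpa [cycleHull] using hw
  have hsub := cycleHull_subset hST hT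
  exact cycleConvex_iff.1 hT w hwT (inclusion hsub x) (inclusion hsub y) hx hy
    ((inclusion_injective hsub).ne hxy) (hr.map (G.induceHomOfLE hsub).toHom)

theorem CycleConvex.comap {G' : SimpleGraph W} {T : Set W} (hT : CycleConvex G' T)
    (f : G →g G') (hf : Function.Injective f) : CycleConvex G (f ⁻¹' T) := by
  refine cycleConvex_iff.2 fun w hw x y hx hy hxy hr => ?_
  have hinj := induceHom_injective f (mapsTo_preimage f T) hf.injOn
  exact cycleConvex_iff.1 hT (f w) hw _ _ (f.map_adj hx) (f.map_adj hy) (hinj.ne hxy)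
    (hr.map (induceHom f (mapsTo_preimage f T)))

theorem cycleHullNumber_le_ncard (h : cycleHull G S = univ) : cycleHullNumber G ≤ S.ncard :=
  Nat.sInf_le ⟨S, rfl, h⟩

theorem exists_cycleHull_eq_univ_ncard_eq (G : SimpleGraph V) :
    ∃ S, cycleHull G S = univ ∧ S.ncard = cycleHullNumber G := by
  obtain ⟨S, hS, h⟩ := Nat.sInf_mem (s := {n | ∃ S : Set V, S.ncard = n ∧ cycleHull G S = univ})
    ⟨_, univ, rfl, cycleHull_univ G⟩
  exact ⟨S, h, hS⟩

end CycleConvex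

section BoxProd

variable {G : SimpleGraph α} {H : SimpleGraph β}

theorem reachable_induce_prod_fst {C : Set α} {B : Set β} {x y : ↥(C ×ˢ B)}
    (h : ((G □ H).induce (C ×ˢ B)).Reachable x y) :
    (G.induce C).Reachable ⟨x.1.1, x.2.1⟩ ⟨y.1.1, y.2.1⟩ := by
  rw [reachable_iff_reflTransGen] at h ⊢
  refine h.lift' (fun z => (⟨z.1.1, z.2.1⟩ : C)) fun (a b : ↥(C ×ˢ B)) (hab : (G □ H).Adj a b) => ?_
  change Relation.ReflTransGen (G.induce C).Adj ⟨a.1.1, a.2.1⟩ ⟨b.1.1, b.2.1⟩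
  rcases hab with ⟨hG, -⟩ | ⟨-, h1⟩
  · exact .single hG
  · have : (⟨a.1.1, a.2.1⟩ : C) = ⟨b.1.1, b.2.1⟩ := Subtype.ext h1
    exact this ▸ Relation.ReflTransGen.refl

theorem CycleConvex.prod_univ {C : Set α} (hC : CycleConvex G C) :
    CycleConvex (G □ H) (C ×ˢ (univ : Set β)) := by
  refine cycleConvex_iff.2 fun w hw x y hx hy hxy hr => ?_
  have hw₁ : w.1 ∉ C := fun h => hw ⟨h, trivial⟩
  -- a neighbour of `w` in `C ×ˢ univ` cannot share the first coordinate `w.1 ∉ C`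
  have hnbr : ∀ z : ↥(C ×ˢ (univ : Set β)), (G □ H).Adj w z → G.Adj w.1 z.1.1 ∧ w.2 = z.1.2 :=
    fun z hz => hz.resolve_right fun h => hw₁ (h.2 ▸ z.2.1)
  obtain ⟨hx₁, hx₂⟩ := hnbr x hx
  obtain ⟨hy₁, hy₂⟩ := hnbr y hy
  refine cycleConvex_iff.1 hC w.1 hw₁ ⟨x.1.1, x.2.1⟩ ⟨y.1.1, y.2.1⟩ hx₁ hy₁ (fun h => hxy ?_)
    (reachable_induce_prod_fst hr)
  exact Subtype.ext (Prod.ext (Subtype.mk.inj h) (hx₂.symm.trans hy₂))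

theorem CycleConvex.mem_of_square {D : Set (α × β)} (hD : CycleConvex (G □ H) D) {u u' : α}
    {b b' : β} (hu : G.Adj u u') (hb : H.Adj b b') (h₁ : (u, b) ∈ D) (h₂ : (u, b') ∈ D)
    (h₃ : (u', b) ∈ D) : (u', b') ∈ D := by
  by_contra hw
  have hr : ((G □ H).induce D).Reachable ⟨_, h₂⟩ ⟨_, h₃⟩ :=
    (show ((G □ H).induce D).Adj ⟨_, h₂⟩ ⟨_, h₁⟩ from .inr ⟨hb.symm, rfl⟩).reachable.trans
      (show ((G □ H).induce D).Adj ⟨_, h₁⟩ ⟨_, h₃⟩ from .inl ⟨hu, rfl⟩).reachable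
  exact cycleConvex_iff.1 hD _ hw _ _ (.inl ⟨hu.symm, rfl⟩) (.inr ⟨hb.symm, rfl⟩)
    (fun h => hu.ne (congrArg Prod.fst (Subtype.mk.inj h))) hr

theorem cycleHull_image_fst_eq_univ [Nonempty β] {S : Set (α × β)}
    (hS : cycleHull (G □ H) S = univ) : cycleHull G (Prod.fst '' S) = univ := by
  have h := ((cycleConvex_cycleHull G (Prod.fst '' S)).prod_univ (H := H)).eq_univ_of_subset hS
    fun p hp => ⟨subset_cycleHull _ _ ⟨p, hp, rfl⟩, trivial⟩
  obtain ⟨b⟩ := ‹Nonempty β›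
  exact eq_univ_of_forall fun a => (eq_univ_iff_forall.1 h (a, b)).1

theorem cycleHull_boxProd_eq_univ (hG : G.Connected) (hH : H.Connected) {S : Set α}
    (hS : cycleHull G S = univ) {b₁ b₂ : β} (hb : cycleHull H {b₁, b₂} = univ) (u₀ : α) :
    cycleHull (G □ H) ((·, b₁) '' S ∪ {(u₀, b₂)}) = univ := by
  set D := cycleHull (G □ H) ((·, b₁) '' S ∪ {(u₀, b₂)})
  have hD : CycleConvex (G □ H) D := cycleConvex_cycleHull _ _
  have hsub : (·, b₁) '' S ∪ {(u₀, b₂)} ⊆ D := subset_cycleHull _ _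
  have hrow : ∀ u, (u, b₁) ∈ D := eq_univ_iff_forall.1 <|
    (hD.comap (G.boxProdLeft H b₁).toHom (G.boxProdLeft H b₁).injective).eq_univ_of_subset hS
      fun u hu => hsub (.inl ⟨u, hu, rfl⟩)
  have hcol : ∀ b, (u₀, b) ∈ D := eq_univ_iff_forall.1 <|
    (hD.comap (G.boxProdRight H u₀).toHom (G.boxProdRight H u₀).injective).eq_univ_of_subset hb <|
      insert_subset (hrow u₀) (singleton_subset_iff.2 (hsub (.inr rfl)))
  have hspread : ∀ ⦃u u'⦄, G.Adj u u' → (∀ b, (u, b) ∈ D) → ∀ b, (u', b) ∈ D :=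
    fun u u' hu hfull b => (hH.preconnected b₁ b).of_adj_imp
      (fun _ _ hb => hD.mem_of_square hu hb (hfull _) (hfull _)) (hrow u')
  exact eq_univ_of_forall fun ⟨u, b⟩ => (hG.preconnected u₀ u).of_adj_imp hspread hcol b

end BoxProd

theorem stmt_8_general [Fintype α] [Fintype β] (G : SimpleGraph α) (H : SimpleGraph β)
    (hG : G.Connected) (hH : H.Connected) (hH2 : cycleHullNumber H = 2) :
    cycleHullNumber G ≤ cycleHullNumber (G □ H) ∧
    cycleHullNumber (G □ H) ≤ cycleHullNumber G + 1 := by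
  obtain ⟨S, hS, hScard⟩ := exists_cycleHull_eq_univ_ncard_eq (G □ H)
  obtain ⟨R, hR, hRcard⟩ := exists_cycleHull_eq_univ_ncard_eq G
  obtain ⟨T, hT, hTcard⟩ := exists_cycleHull_eq_univ_ncard_eq H
  obtain ⟨b₁, b₂, -, rfl⟩ := ncard_eq_two.1 (hTcard.trans hH2)
  obtain ⟨u₀⟩ := hG.nonempty
  have := hH.nonempty
  constructor
  · calc cycleHullNumber G ≤ (Prod.fst '' S).ncard :=
          cycleHullNumber_le_ncard (cycleHull_image_fst_eq_univ hS)
      _ ≤ S.ncard := ncard_image_le S.toFinite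
      _ = cycleHullNumber (G □ H) := hScard
  · calc cycleHullNumber (G □ H) ≤ ((·, b₁) '' R ∪ {(u₀, b₂)}).ncard :=
          cycleHullNumber_le_ncard (cycleHull_boxProd_eq_univ hG hH hR hT u₀)
      _ ≤ ((·, b₁) '' R).ncard + ({(u₀, b₂)} : Set (α × β)).ncard := ncard_union_le _ _
      _ = cycleHullNumber G + 1 := by
          rw [ncard_image_of_injective _ (Prod.mk_left_injective b₁), ncard_singleton, hRcard]

theorem stmt_8 [Fintype α] [Fintype β] (G : SimpleGraph α) (H : SimpleGraph β)
    [Nontrivial α] [Nontrivial β] (hG : G.Connected) (hH : H.Connected)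
    (hH2 : cycleHullNumber H = 2) :
    cycleHullNumber G ≤ cycleHullNumber (G □ H) ∧
    cycleHullNumber (G □ H) ≤ cycleHullNumber G + 1 :=
  stmt_8_general G H hG hH hH2
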